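/- arXiv:1902.05951 — 5 statements merged into one kernel-verified Lean document; each statement's English description precedes it below -/
import Mathlib

section
/- Let Z₁,…,Z₅ ∈ ℝ⁴ have all ordered 4×4 minors positive (⟨Z_iZ_jZ_kZ_l⟩ > 0 for i<j<k<l), and let A ∈ ℝ⁴ satisfy ⟨A Z₁Z₂Z₃⟩ > 0 and ⟨A Z₁Z₃Z₄⟩ < 0. Then ⟨A Z₁Z₃Z₅⟩ < 0. -/
noncomputable def det4 (x y z w : Fin 4 → ℝ) : ℝ := Matrix.det (Matrix.of ![x, y, z, w])

/-!
Read `[x y] := det4 (Z 0) (Z 2) x y` as a bracket on the plane `ℝ⁴ ⧸ span {Z 0, Z 2}`. The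
three-term Plücker relation `[A Z₁] [Z₃ Z₄] - [A Z₃] [Z₁ Z₄] + [A Z₄] [Z₁ Z₃] = 0` then fixes the
sign of `[A Z₄] = ⟨A Z₀ Z₂ Z₄⟩`: up to reordering, every other bracket in it is a positive minor or
one of the two brackets with `A` whose signs are given, and the two known products have the same
sign.
-/

lemma det4_eq (x y z w : Fin 4 → ℝ) : det4 x y z w =
    x 0 * (y 1 * (z 2 * w 3 - z 3 * w 2) - y 2 * (z 1 * w 3 - z 3 * w 1)
      + y 3 * (z 1 * w 2 - z 2 * w 1))
  - x 1 * (y 0 * (z 2 * w 3 - z 3 * w 2) - y 2 * (z 0 * w 3 - z 3 * w 0)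
      + y 3 * (z 0 * w 2 - z 2 * w 0))
  + x 2 * (y 0 * (z 1 * w 3 - z 3 * w 1) - y 1 * (z 0 * w 3 - z 3 * w 0)
      + y 3 * (z 0 * w 1 - z 1 * w 0))
  - x 3 * (y 0 * (z 1 * w 2 - z 2 * w 1) - y 1 * (z 0 * w 2 - z 2 * w 0)
      + y 2 * (z 0 * w 1 - z 1 * w 0)) := by
  rw [det4, Matrix.det_succ_row_zero]
  simp [Fin.sum_univ_succ, Matrix.det_fin_three, Fin.succAbove]
  ring

section Alternating

variable (x y z w : Fin 4 → ℝ)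

lemma det4_swap_left : det4 y x z w = -det4 x y z w := by
  simp only [det4_eq]; ring

lemma det4_swap_mid : det4 x z y w = -det4 x y z w := by
  simp only [det4_eq]; ring

lemma det4_swap_right : det4 x y w z = -det4 x y z w := by
  simp only [det4_eq]; ring

end Alternating

lemma det4_plucker (p q a b c d : Fin 4 → ℝ) :
    det4 p q a b * det4 p q c d - det4 p q a c * det4 p q b d
      + det4 p q a d * det4 p q b c = 0 := by
  simp only [det4_eq]; ring

theorem projected_positivity_obstruction (Z : Fin 5 → Fin 4 → ℝ) (A : Fin 4 → ℝ)
    (hpos : ∀ i j k l : Fin 5, i < j → j < k → k < l →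
      0 < det4 (Z i) (Z j) (Z k) (Z l))
    (h1 : 0 < det4 A (Z 0) (Z 1) (Z 2))
    (h2 : det4 A (Z 0) (Z 2) (Z 3) < 0) :
    det4 A (Z 0) (Z 2) (Z 4) < 0 := by
  have hplucker := det4_plucker (Z 0) (Z 2) A (Z 1) (Z 3) (Z 4)
  have hA1 : det4 (Z 0) (Z 2) A (Z 1) = -det4 A (Z 0) (Z 1) (Z 2) := by
    rw [det4_swap_mid, det4_swap_left, det4_swap_right, neg_neg]
  have hA3 : det4 (Z 0) (Z 2) A (Z 3) = det4 A (Z 0) (Z 2) (Z 3) := by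
    rw [det4_swap_mid, det4_swap_left, neg_neg]
  have hA4 : det4 (Z 0) (Z 2) A (Z 4) = det4 A (Z 0) (Z 2) (Z 4) := by
    rw [det4_swap_mid, det4_swap_left, neg_neg]
  have h13 : det4 (Z 0) (Z 2) (Z 1) (Z 3) = -det4 (Z 0) (Z 1) (Z 2) (Z 3) := det4_swap_mid ..
  have h14 : det4 (Z 0) (Z 2) (Z 1) (Z 4) = -det4 (Z 0) (Z 1) (Z 2) (Z 4) := det4_swap_mid ..
  have p0123 := hpos 0 1 2 3 (by decide) (by decide) (by decide)
  have p0124 := hpos 0 1 2 4 (by decide) (by decide) (by decide)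
  have p0234 := hpos 0 2 3 4 (by decide) (by decide) (by decide)
  rw [hA1, hA3, hA4, h13, h14] at hplucker
  have hprod : det4 A (Z 0) (Z 2) (Z 4) * det4 (Z 0) (Z 1) (Z 2) (Z 3) < 0 := by
    linarith [mul_pos h1 p0234, mul_pos p0124 (neg_pos.mpr h2)]
  exact neg_of_mul_neg_left hprod p0123.le
end

section
/- Let Z₁, P, Q, A ∈ ℝ⁴ and let y, w ∈ ℝ with y ≠ 0, and set B := −Z₁ + y(P + wQ). If ⟨A B P Q⟩ ≠ 0 and ⟨A B Z₁ Q⟩ ≠ 0, then y = ⟨A B Z₁ Q⟩ / ⟨A B P Q⟩ and w = −⟨A B Z₁ P⟩ / ⟨A B Z₁ Q⟩. -/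
lemma det4_eq_detRowAlternating (a b c d : Fin 4 → ℝ) :
    det4 a b c d = Matrix.detRowAlternating ![a, b, c, d] := rfl

lemma det4_eq_update_third (a b c d x : Fin 4 → ℝ) :
    det4 a b x d = Matrix.detRowAlternating (Function.update ![a, b, c, d] 2 x) := by
  rw [det4_eq_detRowAlternating]
  congr 1
  ext i : 1; fin_cases i <;> simp

lemma det4_add_third (a b c c' d : Fin 4 → ℝ) :
    det4 a b (c + c') d = det4 a b c d + det4 a b c' d := by
  rw [det4_eq_update_third a b c d (c + c'), det4_eq_update_third a b c d c,
    det4_eq_update_third a b c d c']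
  exact Matrix.detRowAlternating.map_update_add _ _ _ _

lemma det4_smul_third (a b c d : Fin 4 → ℝ) (t : ℝ) :
    det4 a b (t • c) d = t * det4 a b c d := by
  rw [det4_eq_update_third a b c d (t • c), det4_eq_update_third a b c d c]
  exact Matrix.detRowAlternating.map_update_smul _ _ _ _

lemma det4_second_eq_third (a b d : Fin 4 → ℝ) : det4 a b b d = 0 :=
  Matrix.detRowAlternating.map_eq_zero_of_eq ![a, b, b, d] (i := 1) (j := 2) rfl (by decide)

lemma det4_third_eq_fourth (a b c : Fin 4 → ℝ) : det4 a b c c = 0 :=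
  Matrix.detRowAlternating.map_eq_zero_of_eq ![a, b, c, c] (i := 2) (j := 3) rfl (by decide)

lemma det4_swap_third_fourth (a b c d : Fin 4 → ℝ) : det4 a b d c = -det4 a b c d := by
  have h : ![a, b, d, c] = ![a, b, c, d] ∘ Equiv.swap 2 3 := by
    ext i : 1; fin_cases i <;> rfl
  rw [det4_eq_detRowAlternating, h]
  exact Matrix.detRowAlternating.map_swap ![a, b, c, d] (by decide : (2 : Fin 4) ≠ 3)

lemma det4_neg_second_add_third (a b p q d : Fin 4 → ℝ) (s t : ℝ) :
    det4 a b (-b + s • (p + t • q)) d = s * (det4 a b p d + t * det4 a b q d) := by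
  rw [det4_add_third, ← neg_one_smul ℝ b, det4_smul_third, det4_smul_third, det4_add_third,
    det4_smul_third, det4_second_eq_third, mul_zero, zero_add]

theorem kermit_coordinates_general (Z₁ P Q A : Fin 4 → ℝ) (y w : ℝ)
    (B : Fin 4 → ℝ) (hB : B = -Z₁ + y • (P + w • Q))
    (h2 : det4 A B Z₁ Q ≠ 0) :
    y = det4 A B Z₁ Q / det4 A B P Q ∧
    w = -det4 A B Z₁ P / det4 A B Z₁ Q := by
  have hZ : Z₁ = -B + y • (P + w • Q) := by rw [hB]; abel
  have hZQ : det4 A B Z₁ Q = y * det4 A B P Q := by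
    rw [hZ, det4_neg_second_add_third, det4_third_eq_fourth, mul_zero, add_zero]
  have hZP : det4 A B Z₁ P = -(y * w) * det4 A B P Q := by
    rw [hZ, det4_neg_second_add_third, det4_third_eq_fourth, det4_swap_third_fourth]; ring
  have hy : y ≠ 0 := left_ne_zero_of_mul (hZQ ▸ h2)
  have hPQ : det4 A B P Q ≠ 0 := right_ne_zero_of_mul (hZQ ▸ h2)
  rw [hZQ, hZP]
  constructor <;> field_simp

theorem kermit_coordinates (Z₁ P Q A : Fin 4 → ℝ) (y w : ℝ) (hy : y ≠ 0)
    (B : Fin 4 → ℝ) (hB : B = -Z₁ + y • (P + w • Q))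
    (h1 : det4 A B P Q ≠ 0) (h2 : det4 A B Z₁ Q ≠ 0) :
    y = det4 A B Z₁ Q / det4 A B P Q ∧
    w = -det4 A B Z₁ P / det4 A B Z₁ Q :=
  kermit_coordinates_general Z₁ P Q A y w B hB h2
end

section
/- Let Z₁, Z₂, P, Q ∈ ℝ⁴ and real numbers x_α, x_β, y_α, y_β, w_α, w_β. Define A_α = Z₁ + x_α Z₂, A_β = Z₁ + x_β Z₂, B_α = −Z₁ + y_α(P + w_α Q), B_β = −Z₁ + y_β(P + w_β Q). Then −⟨A_α A_β B_α B_β⟩ = y_α y_β (x_α − x_β)(w_β − w_α)⟨Z₁Z₂PQ⟩. Consequently, if y_α, y_β, ⟨Z₁Z₂PQ⟩ > 0, the mutual positivity condition −⟨A_αA_βB_αB_β⟩ > 0 is equivalent to (w_β − w_α)(x_α − x_β) > 0. -/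
set_option maxHeartbeats 1000000 in
lemma det4_expand' (A : Matrix (Fin 4) (Fin 4) ℝ) : A.det =
    A 0 0*A 1 1*A 2 2*A 3 3 - A 0 0*A 1 1*A 2 3*A 3 2 - A 0 0*A 1 2*A 2 1*A 3 3
  + A 0 0*A 1 2*A 2 3*A 3 1 + A 0 0*A 1 3*A 2 1*A 3 2 - A 0 0*A 1 3*A 2 2*A 3 1
  - A 0 1*A 1 0*A 2 2*A 3 3 + A 0 1*A 1 0*A 2 3*A 3 2 + A 0 1*A 1 2*A 2 0*A 3 3
  - A 0 1*A 1 2*A 2 3*A 3 0 - A 0 1*A 1 3*A 2 0*A 3 2 + A 0 1*A 1 3*A 2 2*A 3 0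
  + A 0 2*A 1 0*A 2 1*A 3 3 - A 0 2*A 1 0*A 2 3*A 3 1 - A 0 2*A 1 1*A 2 0*A 3 3
  + A 0 2*A 1 1*A 2 3*A 3 0 + A 0 2*A 1 3*A 2 0*A 3 1 - A 0 2*A 1 3*A 2 1*A 3 0
  - A 0 3*A 1 0*A 2 1*A 3 2 + A 0 3*A 1 0*A 2 2*A 3 1 + A 0 3*A 1 1*A 2 0*A 3 2
  - A 0 3*A 1 1*A 2 2*A 3 0 - A 0 3*A 1 2*A 2 0*A 3 1 + A 0 3*A 1 2*A 2 1*A 3 0 := by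
  rw [Matrix.det_succ_row_zero, Fin.sum_univ_four]
  simp [Matrix.det_fin_three, Matrix.submatrix_apply, Fin.succAbove,
    show (Fin.succ 2 : Fin 4) = 3 from rfl, show (Fin.castSucc 2 : Fin 4) = 2 from rfl,
    show ¬((2:Fin 4) < 2) from by decide, show ((2:Fin 4) < 3) from by decide,
    Fin.lt_def, show ((3:Fin 4):ℕ) = 3 from rfl]
  ring

lemma det4_expand (a b c d : Fin 4 → ℝ) : det4 a b c d =
    a 0*b 1*c 2*d 3 - a 0*b 1*c 3*d 2 - a 0*b 2*c 1*d 3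
  + a 0*b 2*c 3*d 1 + a 0*b 3*c 1*d 2 - a 0*b 3*c 2*d 1
  - a 1*b 0*c 2*d 3 + a 1*b 0*c 3*d 2 + a 1*b 2*c 0*d 3
  - a 1*b 2*c 3*d 0 - a 1*b 3*c 0*d 2 + a 1*b 3*c 2*d 0
  + a 2*b 0*c 1*d 3 - a 2*b 0*c 3*d 1 - a 2*b 1*c 0*d 3
  + a 2*b 1*c 3*d 0 + a 2*b 3*c 0*d 1 - a 2*b 3*c 1*d 0
  - a 3*b 0*c 1*d 2 + a 3*b 0*c 2*d 1 + a 3*b 1*c 0*d 2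
  - a 3*b 1*c 2*d 0 - a 3*b 2*c 0*d 1 + a 3*b 2*c 1*d 0 := by
  rw [det4, det4_expand']
  simp [Matrix.cons_val_zero, Matrix.cons_val_one]

theorem ladder_equal_index_case (Z₁ Z₂ P Q : Fin 4 → ℝ)
    (xα xβ yα yβ wα wβ : ℝ) :
    let Aα := Z₁ + xα • Z₂
    let Aβ := Z₁ + xβ • Z₂
    let Bα := -Z₁ + yα • (P + wα • Q)
    let Bβ := -Z₁ + yβ • (P + wβ • Q)
    (-det4 Aα Aβ Bα Bβ) = yα * yβ * (xα - xβ) * (wβ - wα) * det4 Z₁ Z₂ P Q ∧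
    (0 < yα → 0 < yβ → 0 < det4 Z₁ Z₂ P Q →
      (0 < -det4 Aα Aβ Bα Bβ ↔ 0 < (wβ - wα) * (xα - xβ))) := by
  intro Aα Aβ Bα Bβ
  have key : (-det4 Aα Aβ Bα Bβ) = yα * yβ * (xα - xβ) * (wβ - wα) * det4 Z₁ Z₂ P Q := by
    simp only [Aα, Aβ, Bα, Bβ, det4_expand, Pi.add_apply, Pi.neg_apply, Pi.smul_apply,
      smul_eq_mul]
    ring
  refine ⟨key, fun hyα hyβ hd => ?_⟩
  rw [key]
  have h : yα * yβ * (xα - xβ) * (wβ - wα) * det4 Z₁ Z₂ P Q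
      = (yα * yβ * det4 Z₁ Z₂ P Q) * ((wβ - wα) * (xα - xβ)) := by ring
  rw [h]
  exact mul_pos_iff_of_pos_left (mul_pos (mul_pos hyα hyβ) hd)
end

section
/- (Gordan's theorem) Let A be an m×n real matrix. Then exactly one of the following holds: (1) there exists y ∈ ℝᵐ with yᵀA > 0 componentwise (every entry of yᵀA strictly positive); (2) there exists a nonzero x ∈ ℝⁿ with x ≥ 0 componentwise and Ax = 0. -/
/-!
If `y ᵥ* A > 0` and `x ≥ 0`, `x ≠ 0`, then `0 < (y ᵥ* A) ⬝ᵥ x = y ⬝ᵥ (A *ᵥ x)`, so `A *ᵥ x ≠ 0`.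
Conversely, if no such `x` is in the kernel of `A`, then `0` lies outside the compact convex set
`A '' stdSimplex`, and a hyperplane strictly separating the two gives `y` with `y ⬝ᵥ t > 0` on that
set; the columns of `A` are the images of the vertices of the simplex.
-/

open Matrix

theorem exists_dotProduct_pos_of_zero_notMem {ι : Type*} [Fintype ι] {T : Set (ι → ℝ)}
    (hconv : Convex ℝ T) (hclosed : IsClosed T) (h0 : (0 : ι → ℝ) ∉ T) :
    ∃ y : ι → ℝ, ∀ t ∈ T, 0 < y ⬝ᵥ t := by
  classical
  obtain ⟨f, u, hf0, hfT⟩ := geometric_hahn_banach_point_closed hconv hclosed h0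
  refine ⟨(dotProductEquiv ℝ ι).symm f.toLinearMap, fun t ht => ?_⟩
  have hdot : (dotProductEquiv ℝ ι).symm f.toLinearMap ⬝ᵥ t = f t :=
    LinearMap.congr_fun ((dotProductEquiv ℝ ι).apply_symm_apply f.toLinearMap) t
  have hu : 0 < u := by simpa using hf0
  exact hdot ▸ hu.trans (hfT t ht)

theorem dotProduct_pos_of_pos_of_nonneg {κ : Type*} [Fintype κ] {u x : κ → ℝ}
    (hu : ∀ j, 0 < u j) (hx : ∀ j, 0 ≤ x j) (hx0 : x ≠ 0) : 0 < u ⬝ᵥ x := by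
  obtain ⟨j, hj⟩ := Function.ne_iff.mp hx0
  exact Finset.sum_pos' (fun i _ => mul_nonneg (hu i).le (hx i))
    ⟨j, Finset.mem_univ j, mul_pos (hu j) ((hx j).lt_of_ne' hj)⟩

theorem eq_zero_of_vecMul_pos_of_mulVec_eq_zero {ι κ : Type*} [Fintype ι] [Fintype κ]
    {A : Matrix ι κ ℝ} {y : ι → ℝ} {x : κ → ℝ} (hy : ∀ j, 0 < (y ᵥ* A) j) (hx : ∀ j, 0 ≤ x j)
    (hAx : A *ᵥ x = 0) : x = 0 := by
  by_contra hx0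
  have hpos := dotProduct_pos_of_pos_of_nonneg hy hx hx0
  rw [← dotProduct_mulVec, hAx, dotProduct_zero] at hpos
  exact hpos.false

theorem zero_notMem_image_mulVec_stdSimplex {ι κ : Type*} [Fintype κ] {A : Matrix ι κ ℝ}
    (hA : ∀ x : κ → ℝ, (∀ j, 0 ≤ x j) → A *ᵥ x = 0 → x = 0) :
    (0 : ι → ℝ) ∉ (A *ᵥ ·) '' stdSimplex ℝ κ := by
  rintro ⟨x, hx, hAx⟩
  have hsum := hx.2
  rw [hA x hx.1 hAx] at hsum
  simp at hsum

theorem exists_vecMul_pos {ι κ : Type*} [Fintype ι] [Fintype κ] {A : Matrix ι κ ℝ}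
    (hA : ∀ x : κ → ℝ, (∀ j, 0 ≤ x j) → A *ᵥ x = 0 → x = 0) :
    ∃ y : ι → ℝ, ∀ j, 0 < (y ᵥ* A) j := by
  classical
  have hcompact : IsCompact ((A *ᵥ ·) '' stdSimplex ℝ κ) :=
    (isCompact_stdSimplex ℝ κ).image A.mulVecLin.continuous_of_finiteDimensional
  obtain ⟨y, hy⟩ := exists_dotProduct_pos_of_zero_notMem
    ((convex_stdSimplex ℝ κ).linear_image A.mulVecLin) hcompact.isClosed
    (zero_notMem_image_mulVec_stdSimplex hA)
  refine ⟨y, fun j => ?_⟩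
  have hcol := hy _ ⟨_, single_mem_stdSimplex ℝ j, rfl⟩
  rwa [mulVecLin_apply, mulVec_single_one] at hcol

theorem gordan {m n : ℕ} (A : Matrix (Fin m) (Fin n) ℝ) :
    Xor'
      (∃ y : Fin m → ℝ, ∀ j : Fin n, 0 < Matrix.vecMul y A j)
      (∃ x : Fin n → ℝ, x ≠ 0 ∧ (∀ j, 0 ≤ x j) ∧ Matrix.mulVec A x = 0) := by
  by_cases hQ : ∃ x : Fin n → ℝ, x ≠ 0 ∧ (∀ j, 0 ≤ x j) ∧ A *ᵥ x = 0
  · refine Or.inr ⟨hQ, fun ⟨y, hy⟩ => ?_⟩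
    obtain ⟨x, hx0, hx, hAx⟩ := hQ
    exact hx0 (eq_zero_of_vecMul_pos_of_mulVec_eq_zero hy hx hAx)
  · refine Or.inl ⟨exists_vecMul_pos fun x hx hAx => ?_, hQ⟩
    by_contra hx0
    exact hQ ⟨x, hx0, hx, hAx⟩
end

section
/- Let z₁,…,z₅ ∈ ℝ³ and suppose there exist a, b ∈ ℝ³ such that ⟨z₅ab⟩ > 0, −⟨z₄ab⟩ > 0, ⟨z₃ab⟩ > 0, −⟨z₂ab⟩ > 0, and ⟨z₁ab⟩ > 0 (where ⟨xyz⟩ is the 3×3 determinant). Then there exist no real numbers c₁,…,c₅ such that the lifted vectors Z_i = (z_i, c_i) ∈ ℝ⁴ satisfy ⟨Z_iZ_jZ_kZ_l⟩ > 0 for all 1 ≤ i < j < k < l ≤ 5. -/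
noncomputable def det3 (x y z : Fin 3 → ℝ) : ℝ := Matrix.det (Matrix.of ![x, y, z])

lemma snoc0 (v : Fin 3 → ℝ) (r : ℝ) : (Fin.snoc v r : Fin 4 → ℝ) 0 = v 0 := by simp [Fin.snoc]
lemma snoc1 (v : Fin 3 → ℝ) (r : ℝ) : (Fin.snoc v r : Fin 4 → ℝ) 1 = v 1 := by simp [Fin.snoc]
lemma snoc2 (v : Fin 3 → ℝ) (r : ℝ) : (Fin.snoc v r : Fin 4 → ℝ) 2 = v 2 := by simp [Fin.snoc]; rfl
lemma snoc3 (v : Fin 3 → ℝ) (r : ℝ) : (Fin.snoc v r : Fin 4 → ℝ) 3 = r := by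
  simp [Fin.snoc]

lemma det3_eq (x y z : Fin 3 → ℝ) : det3 x y z =
    x 0 * (y 1 * z 2 - y 2 * z 1) - x 1 * (y 0 * z 2 - y 2 * z 0) + x 2 * (y 0 * z 1 - y 1 * z 0) := by
  simp [det3, Matrix.det_fin_three]; ring

lemma key_identity (z : Fin 5 → Fin 3 → ℝ) (c : Fin 5 → ℝ) (a b : Fin 3 → ℝ) :
    det4 (Fin.snoc (z 1) (c 1)) (Fin.snoc (z 2) (c 2)) (Fin.snoc (z 3) (c 3)) (Fin.snoc (z 4) (c 4)) * det3 (z 0) a b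
    - det4 (Fin.snoc (z 0) (c 0)) (Fin.snoc (z 2) (c 2)) (Fin.snoc (z 3) (c 3)) (Fin.snoc (z 4) (c 4)) * det3 (z 1) a b
    + det4 (Fin.snoc (z 0) (c 0)) (Fin.snoc (z 1) (c 1)) (Fin.snoc (z 3) (c 3)) (Fin.snoc (z 4) (c 4)) * det3 (z 2) a b
    - det4 (Fin.snoc (z 0) (c 0)) (Fin.snoc (z 1) (c 1)) (Fin.snoc (z 2) (c 2)) (Fin.snoc (z 4) (c 4)) * det3 (z 3) a b
    + det4 (Fin.snoc (z 0) (c 0)) (Fin.snoc (z 1) (c 1)) (Fin.snoc (z 2) (c 2)) (Fin.snoc (z 3) (c 3)) * det3 (z 4) a b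
    = 0 := by
  simp only [det4_eq, det3_eq, snoc0, snoc1, snoc2, snoc3]
  ring

theorem projection_obstruction (z : Fin 5 → Fin 3 → ℝ)
    (h : ∃ a b : Fin 3 → ℝ,
      0 < det3 (z 4) a b ∧ 0 < -det3 (z 3) a b ∧ 0 < det3 (z 2) a b ∧
      0 < -det3 (z 1) a b ∧ 0 < det3 (z 0) a b) :
    ¬ ∃ c : Fin 5 → ℝ, ∀ i j k l : Fin 5, i < j → j < k → k < l →
      0 < det4 (Fin.snoc (z i) (c i)) (Fin.snoc (z j) (c j))
            (Fin.snoc (z k) (c k)) (Fin.snoc (z l) (c l)) := by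
  obtain ⟨a, b, h4, h3, h2, h1, h0⟩ := h
  rintro ⟨c, hc⟩
  have D0 := hc 1 2 3 4 (by decide) (by decide) (by decide)
  have D1 := hc 0 2 3 4 (by decide) (by decide) (by decide)
  have D2 := hc 0 1 3 4 (by decide) (by decide) (by decide)
  have D3 := hc 0 1 2 4 (by decide) (by decide) (by decide)
  have D4 := hc 0 1 2 3 (by decide) (by decide) (by decide)
  have key := key_identity z c a b
  nlinarith [mul_pos D0 h0, mul_pos D1 h1, mul_pos D2 h2, mul_pos D3 h3, mul_pos D4 h4]
end
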